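/- arXiv:2108.05088 — 2 statements merged into one kernel-verified Lean document; each statement's English description precedes it below -/
import Mathlib

section
/- Let m, ρ, l, h_0 > 0 and let h_eq : [-l,l] → ℝ be a constant function with value h ∈ (0, h_0), where m = ρ·2l·(h_0 - h) (Archimedes' principle for a flat-bottomed object). Define M̲ = m + ∫_{-l}^{l} ρx²/h dx and α̲ = (1/(2l)) ∫_{-l}^{l} 1/h dx. If h_0 > 2√(2/3)·l and either h ≥ (h_0 + √(h_0² - 8l²/3))/2 or 0 < h ≤ (h_0 - √(h_0² - 8l²/3))/2, then M̲ - 2ρl³α̲ ≤ 0. -/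
/-!
Archimedes' principle gives `m = 2ρl(h₀ - h)`, and on a flat bottom `M̲ = m + 2ρl³/(3h)` and
`α̲ = 1/h`. Hence `M̲ - 2ρl³α̲ = -(2ρl/h)(h² - h₀h + 2l²/3)`, and the condition on `h` says
exactly that `h` lies outside the open interval between the roots of `X² - h₀X + 2l²/3`.
-/

open Real

/-- For a negative discriminant `√` returns `0`, so the hypothesis holds for every `x`;
so does the conclusion, as the quadratic has no real roots. -/
lemma quadratic_nonneg_of_roots_le_or_le (b c x : ℝ)
    (hx : (b + √(b ^ 2 - 4 * c)) / 2 ≤ x ∨ x ≤ (b - √(b ^ 2 - 4 * c)) / 2) :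
    0 ≤ x ^ 2 - b * x + c := by
  rcases lt_or_ge (b ^ 2 - 4 * c) 0 with hd | hd
  · nlinarith [sq_nonneg (x - b / 2)]
  · set s := √(b ^ 2 - 4 * c)
    have hs : 0 ≤ s := sqrt_nonneg _
    have hfactor : x ^ 2 - b * x + c = (x - (b + s) / 2) * (x - (b - s) / 2) := by
      have : s ^ 2 = b ^ 2 - 4 * c := sq_sqrt hd
      linear_combination this / 4
    rw [hfactor]
    rcases hx with hx | hx
    · exact mul_nonneg (by linarith) (by linarith)
    · exact mul_nonneg_of_nonpos_of_nonpos (by linarith) (by linarith)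

lemma intervalIntegral_mul_sq_div_symm (ρ h l : ℝ) :
    ∫ x in (-l)..l, ρ * x ^ 2 / h = 2 * ρ * l ^ 3 / (3 * h) := by
  simp_rw [mul_div_right_comm ρ, intervalIntegral.integral_const_mul, integral_pow]
  field_simp
  ring

theorem stmt_4_general (m ρ l h₀ h : ℝ) (hρ : 0 < ρ) (hl : 0 < l)
    (hh : 0 < h)
    (hm : m = ρ * (2 * l) * (h₀ - h))
    (M α : ℝ)
    (hM : M = m + ∫ x in (-l)..l, ρ * x ^ 2 / h)
    (hα : α = (1 / (2 * l)) * ∫ x in (-l)..l, (1 : ℝ) / h)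
    (hcase : h ≥ (h₀ + Real.sqrt (h₀ ^ 2 - 8 * l ^ 2 / 3)) / 2 ∨
             (0 < h ∧ h ≤ (h₀ - Real.sqrt (h₀ ^ 2 - 8 * l ^ 2 / 3)) / 2)) :
    M - 2 * ρ * l ^ 3 * α ≤ 0 := by
  have hα' : α = 1 / h := by
    rw [hα, intervalIntegral.integral_const, smul_eq_mul]
    field_simp
    ring
  have hquad : 0 ≤ h ^ 2 - h₀ * h + 2 * l ^ 2 / 3 := by
    apply quadratic_nonneg_of_roots_le_or_le
    rw [show h₀ ^ 2 - 4 * (2 * l ^ 2 / 3) = h₀ ^ 2 - 8 * l ^ 2 / 3 by ring]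
    exact hcase.imp ge_iff_le.mp And.right
  calc M - 2 * ρ * l ^ 3 * α = -(2 * ρ * l / h) * (h ^ 2 - h₀ * h + 2 * l ^ 2 / 3) := by
        rw [hM, hm, hα', intervalIntegral_mul_sq_div_symm]
        field_simp
        ring
    _ ≤ 0 := mul_nonpos_of_nonpos_of_nonneg (neg_nonpos.mpr (by positivity)) hquad

theorem stmt_4 (m ρ l h₀ h : ℝ) (hρ : 0 < ρ) (hl : 0 < l) (hh₀pos : 0 < h₀)
    (hh : 0 < h) (hhh₀ : h < h₀)
    (hm : m = ρ * (2 * l) * (h₀ - h))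
    (M α : ℝ)
    (hM : M = m + ∫ x in (-l)..l, ρ * x ^ 2 / h)
    (hα : α = (1 / (2 * l)) * ∫ x in (-l)..l, (1 : ℝ) / h)
    (hh₀ : h₀ > 2 * Real.sqrt (2 / 3) * l)
    (hcase : h ≥ (h₀ + Real.sqrt (h₀ ^ 2 - 8 * l ^ 2 / 3)) / 2 ∨
             (0 < h ∧ h ≤ (h₀ - Real.sqrt (h₀ ^ 2 - 8 * l ^ 2 / 3)) / 2)) :
    M - 2 * ρ * l ^ 3 * α ≤ 0 :=
  stmt_4_general m ρ l h₀ h hρ hl hh hm M α hM hα hcase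
end

section
/- Let H be a Hilbert space, A the generator of a strongly continuous unitary group (T_t) on H, and B ∈ L(ℂ, H). If A has infinitely many eigenvalues on the imaginary axis, the pair (A, B) is not exactly controllable in any finite time τ > 0, i.e. the map Φ_τ : L²([0,τ];ℂ) → H, Φ_τ u = ∫₀^τ T_{τ-s} B u(s) ds, is not surjective. -/
/-!
Since `T` is unitary and `T t φₘ = e^{iωₘt} φₘ`, the coefficient `⟪φₘ, T t y⟫` has the modulus of
`⟪φₘ, y⟫`. Hence every reachable state `z = ∫₀^τ T (τ - s) (B (u s)) ds` satisfies
`|⟪φₘ, z⟫| ≤ ‖u‖₁ |⟪φₘ, B 1⟫|` for all `m`. By Bessel's inequality `⟪φₘ, B 1⟫ → 0`, so along a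
subsequence these coefficients decay like `1 / (k + 1)²`, and the state with coefficients
`1 / (k + 1)` there (square-summable) violates every such bound.
-/

open MeasureTheory Filter Asymptotics
open scoped InnerProductSpace

section
variable {𝕜 E : Type*} [RCLike 𝕜] [NormedAddCommGroup E] [InnerProductSpace 𝕜 E]

theorem Orthonormal.exists_inner_eq [CompleteSpace E] {ι : Type*} {v : ι → E}
    (hv : Orthonormal 𝕜 v) {c : ι → 𝕜} (hc : Summable fun i => ‖c i‖ ^ 2) :
    ∃ z : E, ∀ i, ⟪v i, z⟫_𝕜 = c i := by
  classical
  let f : lp (fun _ : ι => 𝕜) 2 := ⟨c, memℓp_gen (by simpa using hc)⟩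
  refine ⟨hv.orthogonalFamily.linearIsometry f, fun i => ?_⟩
  have hvi : hv.orthogonalFamily.linearIsometry (lp.single 2 i 1) = v i := by
    simp [OrthogonalFamily.linearIsometry_apply_single]
  rw [← hvi, LinearIsometry.inner_map_map, lp.inner_single_left]
  simp [f]

theorem Orthonormal.tendsto_inner_cofinite {ι : Type*} {v : ι → E} (hv : Orthonormal 𝕜 v) (x : E) :
    Tendsto (fun i => ⟪v i, x⟫_𝕜) cofinite (nhds 0) := by
  have h := (hv.inner_products_summable x).tendsto_cofinite_zero
  rw [tendsto_zero_iff_norm_tendsto_zero]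
  simpa using h.sqrt

theorem Orthonormal.exists_not_isBigO_inner [CompleteSpace E] {ι : Type*} [Infinite ι]
    {v : ι → E} (hv : Orthonormal 𝕜 v) (x : E) :
    ∃ z : E, ¬ (fun i => ⟪v i, z⟫_𝕜) =O[⊤] fun i => ⟪v i, x⟫_𝕜 := by
  set e := Infinite.natEmbedding ι
  have hb : Tendsto (fun k => ‖⟪v (e k), x⟫_𝕜‖) atTop (nhds 0) := by
    rw [← Nat.cofinite_eq_atTop]
    exact ((hv.tendsto_inner_cofinite x).comp e.injective.tendsto_cofinite).norm.trans
      (by simp)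
  obtain ⟨m, hm, hsmall⟩ := extraction_forall_of_eventually
    (P := fun k j => ‖⟪v (e j), x⟫_𝕜‖ < ((k + 1 : ℝ) ^ 2)⁻¹)
    fun k => hb.eventually_lt_const (by positivity)
  have hnorm (k : ℕ) : ‖(((k + 1 : ℝ)⁻¹ : ℝ) : 𝕜)‖ = (k + 1 : ℝ)⁻¹ := by
    rw [RCLike.norm_ofReal, abs_of_pos (by positivity)]
  have hsq : Summable fun k : ℕ => ‖(((k + 1 : ℝ)⁻¹ : ℝ) : 𝕜)‖ ^ 2 := by
    simp_rw [hnorm, inv_pow]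
    exact_mod_cast (summable_nat_add_iff 1).2 (Real.summable_nat_pow_inv.2 one_lt_two)
  obtain ⟨z, hz⟩ := (hv.comp _ (e.injective.comp hm.injective)).exists_inner_eq hsq
  refine ⟨z, fun hO => ?_⟩
  obtain ⟨C, hC0, hC⟩ := hO.exists_pos
  set k := ⌈C⌉₊
  have h := isBigOWith_top.1 hC (e (m k))
  simp only [Function.comp_apply] at hz
  rw [hz, hnorm] at h
  have h' : ((k : ℝ) + 1)⁻¹ ≤ C * ((k + 1 : ℝ) ^ 2)⁻¹ :=
    h.trans (mul_le_mul_of_nonneg_left (hsmall k).le hC0.le)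
  field_simp at h'
  linarith [Nat.le_ceil C]

theorem ContinuousLinearMap.norm_apply_integral_le {F G α : Type*} [NormedAddCommGroup F]
    [NormedSpace 𝕜 F] [NormedSpace ℝ F] [CompleteSpace F] [NormedAddCommGroup G]
    [NormedSpace 𝕜 G] [NormedSpace ℝ G] [CompleteSpace G] [MeasurableSpace α] {μ : Measure α}
    (L : F →L[𝕜] G) (f : α → F) : ‖L (∫ a, f a ∂μ)‖ ≤ ∫ a, ‖L (f a)‖ ∂μ := by
  by_cases hf : Integrable f μ
  · rw [← L.integral_comp_comm hf]
    exact norm_integral_le_integral_norm _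
  · rw [integral_undef hf, map_zero, norm_zero]
    exact integral_nonneg fun _ => norm_nonneg _

theorem LinearIsometry.norm_inner_apply_of_apply_eq_smul {T : E →ₗᵢ[𝕜] E} {v : E} {c : 𝕜}
    (hv : v ≠ 0) (hTv : T v = c • v) (y : E) : ‖⟪v, T y⟫_𝕜‖ = ‖⟪v, y⟫_𝕜‖ := by
  have hc : ‖c‖ = 1 := by
    have h := T.norm_map v
    rw [hTv, norm_smul] at h
    exact (mul_eq_right₀ (norm_ne_zero_iff.2 hv)).1 h
  rw [← T.inner_map_map v y, hTv, inner_smul_left, norm_mul, RCLike.norm_conj, hc, one_mul]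

end

theorem norm_inner_integral_apply_le {H α : Type*} [NormedAddCommGroup H]
    [InnerProductSpace ℂ H] [CompleteSpace H] [MeasurableSpace α] {μ : Measure α}
    (S : α → H →L[ℂ] H) {v : H} (hS : ∀ a y, ‖⟪v, S a y⟫_ℂ‖ = ‖⟪v, y⟫_ℂ‖)
    (B : ℂ →L[ℂ] H) (u : α → ℂ) :
    ‖⟪v, ∫ a, S a (B (u a)) ∂μ⟫_ℂ‖ ≤ (∫ a, ‖u a‖ ∂μ) * ‖⟪v, B 1⟫_ℂ‖ := by
  have hpt (a : α) : ‖⟪v, S a (B (u a))⟫_ℂ‖ = ‖u a‖ * ‖⟪v, B 1⟫_ℂ‖ := by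
    have hB : B (u a) = u a • B 1 := by rw [← map_smul, smul_eq_mul, mul_one]
    rw [hS, hB, inner_smul_right, norm_mul]
  calc ‖⟪v, ∫ a, S a (B (u a)) ∂μ⟫_ℂ‖ ≤ ∫ a, ‖⟪v, S a (B (u a))⟫_ℂ‖ ∂μ :=
        (innerSL ℂ v).norm_apply_integral_le _
    _ = (∫ a, ‖u a‖ ∂μ) * ‖⟪v, B 1⟫_ℂ‖ := by simp_rw [hpt, integral_mul_const]

open scoped ComplexInnerProductSpace in
theorem stmt_11_general {H : Type*} [NormedAddCommGroup H] [InnerProductSpace ℂ H]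
    [CompleteSpace H]
    (T : ℝ → H →L[ℂ] H)
    (hTunitary : ∀ (t : ℝ) (z : H), ‖T t z‖ = ‖z‖)
    (B : ℂ →L[ℂ] H)
    -- infinitely many eigenvalues iω_n of the generator on the imaginary axis:
    (ω : ℕ → ℝ)
    (φ : ℕ → H) (hφ : Orthonormal ℂ φ)
    (heig : ∀ (n : ℕ) (t : ℝ),
      T t (φ n) = Complex.exp (Complex.I * (ω n : ℂ) * (t : ℂ)) • φ n) :
    ∀ τ : ℝ, 0 < τ →
      ¬ (∀ z : H, ∃ u : ℝ → ℂ,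
        MeasureTheory.MemLp u 2 (MeasureTheory.volume.restrict (Set.Ioc (0:ℝ) τ)) ∧
        z = ∫ s in (0:ℝ)..τ, T (τ - s) (B (u s))) := by
  intro τ hτ hcontrol
  obtain ⟨z, hz⟩ := hφ.exists_not_isBigO_inner (B 1)
  obtain ⟨u, -, rfl⟩ := hcontrol z
  refine hz (isBigO_top.2 ⟨∫ s in Set.Ioc 0 τ, ‖u s‖, fun m => ?_⟩)
  rw [intervalIntegral.integral_of_le hτ.le]
  refine norm_inner_integral_apply_le (fun s => T (τ - s)) (fun s y => ?_) B u
  exact LinearIsometry.norm_inner_apply_of_apply_eq_smul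
    (T := ⟨(T (τ - s)).toLinearMap, hTunitary _⟩) (hφ.ne_zero m) (heig m _) y

open scoped ComplexInnerProductSpace in
/-- If the generator of a strongly continuous unitary group has infinitely many
eigenvalues on the imaginary axis (encoded by an orthonormal family of
eigenvectors of the group with distinct frequencies), then the pair (A, B) with
a bounded rank-one control operator B ∈ L(ℂ, H) is not exactly controllable in
any time τ > 0. -/
theorem stmt_11 {H : Type*} [NormedAddCommGroup H] [InnerProductSpace ℂ H]
    [CompleteSpace H]
    (T : ℝ → H →L[ℂ] H)
    (hT0 : T 0 = ContinuousLinearMap.id ℂ H)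
    (hTadd : ∀ s t : ℝ, T (s + t) = (T s).comp (T t))
    (hTunitary : ∀ (t : ℝ) (z : H), ‖T t z‖ = ‖z‖)
    (hTcont : ∀ z : H, Continuous fun t => T t z)
    (B : ℂ →L[ℂ] H)
    -- infinitely many eigenvalues iω_n of the generator on the imaginary axis:
    (ω : ℕ → ℝ) (hωinj : Function.Injective ω)
    (φ : ℕ → H) (hφ : Orthonormal ℂ φ)
    (heig : ∀ (n : ℕ) (t : ℝ),
      T t (φ n) = Complex.exp (Complex.I * (ω n : ℂ) * (t : ℂ)) • φ n) :
    ∀ τ : ℝ, 0 < τ →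
      ¬ (∀ z : H, ∃ u : ℝ → ℂ,
        MeasureTheory.MemLp u 2 (MeasureTheory.volume.restrict (Set.Ioc (0:ℝ) τ)) ∧
        z = ∫ s in (0:ℝ)..τ, T (τ - s) (B (u s))) :=
  stmt_11_general T hTunitary B ω φ hφ heig
end
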